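/- Suppose every algorithm in 𝒜 has a reward function that is either strictly increasing or constant on {1,...,N}, and the supremum max_{A∈𝒜} R_A(1) is attained. Then at any pure strategy platform Nash equilibrium (A₁, A₂), the user quality level Q(A₁,A₂) satisfies max_{A∈𝒜} R_A(1) ≤ Q(A₁,A₂) ≤ max_{A∈𝒜} R_A(N). -/
import Mathlib


open Finset

/-- Number of users choosing platform 1 (encoded as `false`). -/
def count1 {N : ℕ} (p : Fin N → Bool) : ℕ := (univ.filter fun i => p i = false).card

/-- Number of users choosing platform 2 (encoded as `true`). -/
def count2 {N : ℕ} (p : Fin N → Bool) : ℕ := (univ.filter fun i => p i = true).card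

/-- Utility of user `i`: reward of their platform evaluated at that platform's user count. -/
def util {N : ℕ} (R1 R2 : ℕ → ℝ) (p : Fin N → Bool) (i : Fin N) : ℝ :=
  if p i then R2 (count2 p) else R1 (count1 p)

/-- Pure-strategy Nash equilibrium of the user platform-choice game. -/
def userNash {N : ℕ} (R1 R2 : ℕ → ℝ) (p : Fin N → Bool) : Prop :=
  ∀ i, util R1 R2 (Function.update p i (!(p i))) i ≤ util R1 R2 p i

/-- `R` is strictly increasing on `{1,...,N}`. -/
def StrictIncrOn (R : ℕ → ℝ) (N : ℕ) : Prop :=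
  ∀ m n, 1 ≤ m → m < n → n ≤ N → R m < R n

/-- `R` is constant on `{1,...,N}`. -/
def ConstOn (R : ℕ → ℝ) (N : ℕ) : Prop :=
  ∀ m n, 1 ≤ m → m ≤ N → 1 ≤ n → n ≤ N → R m = R n

/-- The set of pure user Nash equilibria when platforms run algorithms `A1`, `A2`. -/
def userEq (N : ℕ) {𝒜 : Type*} (R : 𝒜 → ℕ → ℝ) (A1 A2 : 𝒜) : Set (Fin N → Bool) :=
  {p | userNash (R A1) (R A2) p}

/-- Platform 1's utility: minimum number of its users over pure user equilibria. -/
noncomputable def v1 (N : ℕ) {𝒜 : Type*} (R : 𝒜 → ℕ → ℝ) (A1 A2 : 𝒜) : ℕ :=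
  sInf (count1 '' userEq N R A1 A2)

/-- Platform 2's utility: minimum number of its users over pure user equilibria. -/
noncomputable def v2 (N : ℕ) {𝒜 : Type*} (R : 𝒜 → ℕ → ℝ) (A1 A2 : 𝒜) : ℕ :=
  sInf (count2 '' userEq N R A1 A2)

/-- `(A1, A2)` is a pure Nash equilibrium of the platform game. -/
def platformNash (N : ℕ) {𝒜 : Type*} (R : 𝒜 → ℕ → ℝ) (A1 A2 : 𝒜) : Prop :=
  (∀ A, v1 N R A A2 ≤ v1 N R A1 A2) ∧ (∀ A, v2 N R A1 A ≤ v2 N R A1 A2)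

/-- User quality level: minimum user utility over pure user equilibria and users. -/
noncomputable def Q (N : ℕ) {𝒜 : Type*} (R : 𝒜 → ℕ → ℝ) (A1 A2 : 𝒜) : ℝ :=
  sInf {u | ∃ p ∈ userEq N R A1 A2, ∃ i, util (R A1) (R A2) p i = u}


section Helpers

variable {N : ℕ}

lemma count_add (p : Fin N → Bool) : count1 p + count2 p = N := by
  classical
  have h := Finset.card_filter_add_card_filter_not
    (s := (univ : Finset (Fin N))) (p := fun i => p i = false)
  simp only [Finset.card_univ, Fintype.card_fin] at h
  have h2 : (univ.filter (fun a => ¬ p a = false)) = univ.filter (fun i => p i = true) := by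
    apply Finset.filter_congr
    intro i _
    simp
  rw [h2] at h
  exact h

lemma count1_le (p : Fin N → Bool) : count1 p ≤ N := by
  have := count_add p; omega

lemma count2_le (p : Fin N → Bool) : count2 p ≤ N := by
  have := count_add p; omega

lemma count1_pos {p : Fin N → Bool} {i : Fin N} (h : p i = false) : 1 ≤ count1 p := by
  apply Finset.card_pos.mpr ⟨i, by simp [h]⟩

lemma count2_pos {p : Fin N → Bool} {i : Fin N} (h : p i = true) : 1 ≤ count2 p := by
  apply Finset.card_pos.mpr ⟨i, by simp [h]⟩

lemma existsFalseUser {p : Fin N → Bool} (h : 1 ≤ count1 p) : ∃ j, p j = false := by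
  obtain ⟨j, hj⟩ := Finset.card_pos.mp h
  exact ⟨j, (Finset.mem_filter.mp hj).2⟩

lemma existsTrueUser {p : Fin N → Bool} (h : 1 ≤ count2 p) : ∃ j, p j = true := by
  obtain ⟨j, hj⟩ := Finset.card_pos.mp h
  exact ⟨j, (Finset.mem_filter.mp hj).2⟩

lemma count2_update {p : Fin N → Bool} {i : Fin N} (h : p i = false) :
    count2 (Function.update p i true) = count2 p + 1 := by
  classical
  unfold count2
  have hni : i ∉ univ.filter (fun j => p j = true) := by simp [h]
  have hset : univ.filter (fun j => Function.update p i true j = true)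
      = insert i (univ.filter fun j => p j = true) := by
    ext j
    by_cases hj : j = i
    · subst hj; simp
    · simp [Function.update_apply, hj]
  rw [hset, Finset.card_insert_of_notMem hni]

lemma count1_update {p : Fin N → Bool} {i : Fin N} (h : p i = true) :
    count1 (Function.update p i false) = count1 p + 1 := by
  classical
  unfold count1
  have hni : i ∉ univ.filter (fun j => p j = false) := by simp [h]
  have hset : univ.filter (fun j => Function.update p i false j = false)
      = insert i (univ.filter fun j => p j = false) := by
    ext j
    by_cases hj : j = i
    · subst hj; simp
    · simp [Function.update_apply, hj]
  rw [hset, Finset.card_insert_of_notMem hni]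

lemma nash_false {R1 R2 : ℕ → ℝ} {p : Fin N → Bool} (hp : userNash R1 R2 p)
    {i : Fin N} (h : p i = false) : R2 (count2 p + 1) ≤ R1 (count1 p) := by
  have h1 := hp i
  rw [h] at h1
  simp only [util, Bool.not_false, Function.update_self, if_true, h,
    count2_update h] at h1
  simpa using h1

lemma nash_true {R1 R2 : ℕ → ℝ} {p : Fin N → Bool} (hp : userNash R1 R2 p)
    {i : Fin N} (h : p i = true) : R1 (count1 p + 1) ≤ R2 (count2 p) := by
  have h1 := hp i
  rw [h] at h1
  simp only [util, Bool.not_true, Function.update_self, h,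
    count1_update h] at h1
  simpa using h1

lemma count1_allFalse : count1 (fun _ : Fin N => false) = N := by
  simp [count1]

lemma count2_allTrue : count2 (fun _ : Fin N => true) = N := by
  simp [count2]

lemma allFalse_nash {R1 R2 : ℕ → ℝ} (h : R2 1 ≤ R1 N) :
    userNash (N := N) R1 R2 (fun _ => false) := by
  intro i
  have h2 : count2 (Function.update (fun _ : Fin N => false) i true) = 1 := by
    rw [count2_update (p := fun _ : Fin N => false) rfl]
    simp [count2]
  simp only [util, Bool.not_false, Function.update_self, if_true, h2,
    count1_allFalse]
  simpa using h

lemma allTrue_nash {R1 R2 : ℕ → ℝ} (h : R1 1 ≤ R2 N) :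
    userNash (N := N) R1 R2 (fun _ => true) := by
  intro i
  have h2 : count1 (Function.update (fun _ : Fin N => true) i false) = 1 := by
    rw [count1_update (p := fun _ : Fin N => true) rfl]
    simp [count1]
  simp only [util, Bool.not_true, Function.update_self, h2, count2_allTrue]
  simpa using h

lemma monoLe {R : ℕ → ℝ} (h : StrictIncrOn R N ∨ ConstOn R N) {m n : ℕ}
    (h1 : 1 ≤ m) (h2 : m ≤ n) (h3 : n ≤ N) : R m ≤ R n := by
  rcases h with h | h
  · rcases eq_or_lt_of_le h2 with rfl | hlt
    · exact le_refl _
    · exact (h m n h1 hlt h3).le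
  · exact (h m n h1 (le_trans h2 h3) (le_trans h1 h2) h3).le

variable {𝒜 : Type*}

lemma userEq_nonempty (hN : 1 ≤ N) (R : 𝒜 → ℕ → ℝ)
    (hmono : ∀ A, StrictIncrOn (R A) N ∨ ConstOn (R A) N) (A1 A2 : 𝒜) :
    ∃ p, p ∈ userEq N R A1 A2 := by
  by_cases h : R A2 1 ≤ R A1 N
  · exact ⟨fun _ => false, allFalse_nash h⟩
  · push_neg at h
    refine ⟨fun _ => true, allTrue_nash ?_⟩
    have h1 : R A1 1 ≤ R A1 N := monoLe (hmono A1) le_rfl hN le_rfl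
    have h2 : R A2 1 ≤ R A2 N := monoLe (hmono A2) le_rfl hN le_rfl
    linarith

lemma v1_le {R : 𝒜 → ℕ → ℝ} {A1 A2 : 𝒜} {p : Fin N → Bool}
    (hp : p ∈ userEq N R A1 A2) : v1 N R A1 A2 ≤ count1 p :=
  Nat.sInf_le ⟨p, hp, rfl⟩

lemma v2_le {R : 𝒜 → ℕ → ℝ} {A1 A2 : 𝒜} {p : Fin N → Bool}
    (hp : p ∈ userEq N R A1 A2) : v2 N R A1 A2 ≤ count2 p :=
  Nat.sInf_le ⟨p, hp, rfl⟩

lemma v2_eq_N (hN : 1 ≤ N) (R : 𝒜 → ℕ → ℝ)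
    (hmono : ∀ A, StrictIncrOn (R A) N ∨ ConstOn (R A) N) (A1 B : 𝒜)
    (hlt : R A1 N < R B 1) : v2 N R A1 B = N := by
  have hBN : R B 1 ≤ R B N := monoLe (hmono B) le_rfl hN le_rfl
  have hmem : (fun _ : Fin N => true) ∈ userEq N R A1 B := by
    refine allTrue_nash ?_
    have h1 : R A1 1 ≤ R A1 N := monoLe (hmono A1) le_rfl hN le_rfl
    linarith
  have hall : ∀ q ∈ userEq N R A1 B, count2 q = N := by
    intro q hq
    by_contra hne
    have h2 : count2 q < N := lt_of_le_of_ne (count2_le q) hne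
    have h1 : 1 ≤ count1 q := by have := count_add q; omega
    obtain ⟨j, hj⟩ := existsFalseUser h1
    have hcond := nash_false hq hj
    have hb : R B 1 ≤ R B (count2 q + 1) := monoLe (hmono B) le_rfl (by omega) (by omega)
    have ha : R A1 (count1 q) ≤ R A1 N := monoLe (hmono A1) h1 (count1_le q) le_rfl
    linarith
  have hne : (count2 '' userEq N R A1 B).Nonempty := ⟨N, _, hmem, count2_allTrue⟩
  obtain ⟨q, hq, hqe⟩ := Nat.sInf_mem hne
  rw [v2, ← hqe, hall q hq]

lemma v1_eq_N (hN : 1 ≤ N) (R : 𝒜 → ℕ → ℝ)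
    (hmono : ∀ A, StrictIncrOn (R A) N ∨ ConstOn (R A) N) (B A2 : 𝒜)
    (hlt : R A2 N < R B 1) : v1 N R B A2 = N := by
  have hBN : R B 1 ≤ R B N := monoLe (hmono B) le_rfl hN le_rfl
  have hmem : (fun _ : Fin N => false) ∈ userEq N R B A2 := by
    refine allFalse_nash ?_
    have h1 : R A2 1 ≤ R A2 N := monoLe (hmono A2) le_rfl hN le_rfl
    linarith
  have hall : ∀ q ∈ userEq N R B A2, count1 q = N := by
    intro q hq
    by_contra hne
    have h1 : count1 q < N := lt_of_le_of_ne (count1_le q) hne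
    have h2 : 1 ≤ count2 q := by have := count_add q; omega
    obtain ⟨j, hj⟩ := existsTrueUser h2
    have hcond := nash_true hq hj
    have hb : R B 1 ≤ R B (count1 q + 1) := monoLe (hmono B) le_rfl (by omega) (by omega)
    have ha : R A2 (count2 q) ≤ R A2 N := monoLe (hmono A2) h2 (count2_le q) le_rfl
    linarith
  have hne : (count1 '' userEq N R B A2).Nonempty := ⟨N, _, hmem, count1_allFalse⟩
  obtain ⟨q, hq, hqe⟩ := Nat.sInf_mem hne
  rw [v1, ← hqe, hall q hq]

end Helpers

/-- at any platform Nash equilibrium, the user quality level lies between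
the single-user optimum `max_A R A 1` and the global optimum `max_A R A N`. -/
theorem quality_level_bounds (N : ℕ) (hN : 1 ≤ N) {𝒜 : Type*}
    (R : 𝒜 → ℕ → ℝ)
    (hmono : ∀ A, StrictIncrOn (R A) N ∨ ConstOn (R A) N)
    (Amax1 : 𝒜) (hmax1 : ∀ A, R A 1 ≤ R Amax1 1)
    (AmaxN : 𝒜) (hmaxN : ∀ A, R A N ≤ R AmaxN N)
    (A1 A2 : 𝒜) (heq : platformNash N R A1 A2) :
    R Amax1 1 ≤ Q N R A1 A2 ∧ Q N R A1 A2 ≤ R AmaxN N := by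
  classical
  set M := R Amax1 1 with hM
  obtain ⟨p0, hp0⟩ := userEq_nonempty hN R hmono A1 A2
  set i0 : Fin N := ⟨0, hN⟩ with hi0
  set S : Set ℝ := {u | ∃ p ∈ userEq N R A1 A2, ∃ i, util (R A1) (R A2) p i = u} with hS
  have hu0 : util (R A1) (R A2) p0 i0 ∈ S := ⟨p0, hp0, i0, rfl⟩
  have hSne : S.Nonempty := ⟨_, hu0⟩
  have hQ : Q N R A1 A2 = sInf S := rfl
  -- Key: every equilibrium utility is at least M
  have hkey : ∀ u ∈ S, M ≤ u := by
    rintro u ⟨p, hp, i, rfl⟩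
    by_contra hbad
    push_neg at hbad
    have hp' : userNash (R A1) (R A2) p := hp
    have hcadd := count_add p
    -- derive the disjunction
    have key : (R A1 N < M ∧ count2 p < N) ∨ (R A2 N < M ∧ count1 p < N) := by
      cases hpi : p i with
      | false =>
        have hc1 : 1 ≤ count1 p := count1_pos hpi
        have hA1 : R A1 (count1 p) < M := by
          have : util (R A1) (R A2) p i = R A1 (count1 p) := by simp [util, hpi]
          rwa [this] at hbad
        have h12 : R A2 (count2 p + 1) < M :=
          lt_of_le_of_lt (nash_false hp' hpi) hA1
        by_cases hc2 : 1 ≤ count2 p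
        · have hA2 : R A2 (count2 p) < M :=
            lt_of_le_of_lt (monoLe (hmono A2) hc2 (Nat.le_succ _) (by omega)) h12
          obtain ⟨j, hj⟩ := existsTrueUser hc2
          have h21 : R A1 (count1 p + 1) < M :=
            lt_of_le_of_lt (nash_true hp' hj) hA2
          rcases hmono A1 with hs1 | hco1
          · rcases hmono A2 with hs2 | hco2
            · exfalso
              have e1 := hs1 (count1 p) (count1 p + 1) hc1 (Nat.lt_succ_self _) (by omega)
              have e2 := hs2 (count2 p) (count2 p + 1) hc2 (Nat.lt_succ_self _) (by omega)
              have e3 := nash_false hp' hpi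
              have e4 := nash_true hp' hj
              linarith
            · right
              refine ⟨?_, by omega⟩
              have := hco2 N (count2 p) hN le_rfl hc2 (by omega)
              linarith
          · left
            refine ⟨?_, by omega⟩
            have := hco1 N (count1 p) hN le_rfl hc1 (by omega)
            linarith
        · left
          have hc2' : count2 p = 0 := by omega
          have hc1' : count1 p = N := by omega
          exact ⟨by rwa [hc1'] at hA1, by omega⟩
      | true =>
        have hc2 : 1 ≤ count2 p := count2_pos hpi
        have hA2 : R A2 (count2 p) < M := by
          have : util (R A1) (R A2) p i = R A2 (count2 p) := by simp [util, hpi]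
          rwa [this] at hbad
        have h21 : R A1 (count1 p + 1) < M :=
          lt_of_le_of_lt (nash_true hp' hpi) hA2
        by_cases hc1 : 1 ≤ count1 p
        · have hA1 : R A1 (count1 p) < M :=
            lt_of_le_of_lt (monoLe (hmono A1) hc1 (Nat.le_succ _) (by omega)) h21
          obtain ⟨j, hj⟩ := existsFalseUser hc1
          have h12 : R A2 (count2 p + 1) < M :=
            lt_of_le_of_lt (nash_false hp' hj) hA1
          rcases hmono A1 with hs1 | hco1
          · rcases hmono A2 with hs2 | hco2
            · exfalso
              have e1 := hs1 (count1 p) (count1 p + 1) hc1 (Nat.lt_succ_self _) (by omega)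
              have e2 := hs2 (count2 p) (count2 p + 1) hc2 (Nat.lt_succ_self _) (by omega)
              have e3 := nash_false hp' hj
              have e4 := nash_true hp' hpi
              linarith
            · right
              refine ⟨?_, by omega⟩
              have := hco2 N (count2 p) hN le_rfl hc2 (by omega)
              linarith
          · left
            refine ⟨?_, by omega⟩
            have := hco1 N (count1 p) hN le_rfl hc1 (by omega)
            linarith
        · right
          have hc2' : count2 p = N := by omega
          exact ⟨by rwa [hc2'] at hA2, by omega⟩
    rcases key with ⟨hlt, hc⟩ | ⟨hlt, hc⟩
    · have h1 : v2 N R A1 Amax1 = N := v2_eq_N hN R hmono A1 Amax1 hlt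
      have h2 : v2 N R A1 Amax1 ≤ v2 N R A1 A2 := heq.2 Amax1
      have h3 : v2 N R A1 A2 ≤ count2 p := v2_le hp
      omega
    · have h1 : v1 N R Amax1 A2 = N := v1_eq_N hN R hmono Amax1 A2 hlt
      have h2 : v1 N R Amax1 A2 ≤ v1 N R A1 A2 := heq.1 Amax1
      have h3 : v1 N R A1 A2 ≤ count1 p := v1_le hp
      omega
  constructor
  · rw [hQ]
    exact le_csInf hSne hkey
  · -- upper bound
    have hbdd : BddBelow S := by
      have hfin : (((Finset.Icc 1 N).image (R A1) ∪ (Finset.Icc 1 N).image (R A2) :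
          Finset ℝ) : Set ℝ).Finite := Finset.finite_toSet _
      refine BddBelow.mono ?_ hfin.bddBelow
      rintro u ⟨p, hp, i, rfl⟩
      cases hpi : p i with
      | false =>
        have h1 : 1 ≤ count1 p := count1_pos hpi
        simp only [util, hpi, Bool.false_eq_true, if_false, Finset.coe_union,
          Set.mem_union, Finset.coe_image, Set.mem_image]
        exact Or.inl ⟨count1 p, by simp [Finset.mem_Icc, h1, count1_le p], rfl⟩
      | true =>
        have h2 : 1 ≤ count2 p := count2_pos hpi
        simp only [util, hpi, if_true, Finset.coe_union,
          Set.mem_union, Finset.coe_image, Set.mem_image]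
        exact Or.inr ⟨count2 p, by simp [Finset.mem_Icc, h2, count2_le p], rfl⟩
    have hle : util (R A1) (R A2) p0 i0 ≤ R AmaxN N := by
      cases hpi : p0 i0 with
      | false =>
        have h1 : 1 ≤ count1 p0 := count1_pos hpi
        have : util (R A1) (R A2) p0 i0 = R A1 (count1 p0) := by simp [util, hpi]
        rw [this]
        exact le_trans (monoLe (hmono A1) h1 (count1_le p0) le_rfl) (hmaxN A1)
      | true =>
        have h2 : 1 ≤ count2 p0 := count2_pos hpi
        have : util (R A1) (R A2) p0 i0 = R A2 (count2 p0) := by simp [util, hpi]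
        rw [this]
        exact le_trans (monoLe (hmono A2) h2 (count2_le p0) le_rfl) (hmaxN A2)
    rw [hQ]
    exact le_trans (csInf_le hbdd hu0) hle
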